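/- arXiv:2510.15674 — 2 statements merged into one kernel-verified Lean document; each statement's English description precedes it below -/
import Mathlib

section
/- Suppose either W^T(p̄ − p̄_target) ≠ 0 in ℝ^d, or (1/|S|)·Σ_{s∈S} (W h_s)_{y_s} ≠ (1/|S|)·Σ_{s∈S} Σ_{k=1}^{V} p_s(k)·(W h_s)_k. Then there exists a pair (δ, T) ∈ ℝ^d × (0, ∞) with (δ, T) ≠ (0, 1) such that L(δ, T) < L(0, 1). -/
noncomputable section

/-- The calibration loss `L(δ, T)`: the average over generation steps `s ∈ S` of
`log Σ_k exp(g_s(δ)_k / T) − g_s(δ)_{y_s} / T`, where `g_s(δ) = W (h_s + δ)`. -/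
def calibLoss {d V : ℕ} {S : Type*} [Fintype S]
    (W : Matrix (Fin V) (Fin d) ℝ) (h : S → Fin d → ℝ) (y : S → Fin V)
    (δ : Fin d → ℝ) (T : ℝ) : ℝ :=
  (Fintype.card S : ℝ)⁻¹ *
    ∑ s : S, (Real.log (∑ k : Fin V, Real.exp (W.mulVec (h s + δ) k / T))
      - W.mulVec (h s + δ) (y s) / T)

/-- `p_s = softmax_1(W h_s)`: the model's predictive distribution at temperature 1. -/
def softmax1 {d V : ℕ} {S : Type*}
    (W : Matrix (Fin V) (Fin d) ℝ) (h : S → Fin d → ℝ) (s : S) (k : Fin V) : ℝ :=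
  Real.exp (W.mulVec (h s) k) / ∑ l : Fin V, Real.exp (W.mulVec (h s) l)

/-!
Both hypotheses say that a directional derivative of `L` at `(0, 1)` is nonzero. Along
`δ = t • v` (with `T = 1`) every `g_s` moves by `t • W v`, so the derivative at `t = 0` is
`(p̄ − p̄_target) ⬝ W v = Wᵀ (p̄ − p̄_target) ⬝ v`, which is `-‖Wᵀ (p̄ − p̄_target)‖²` for
`v = -Wᵀ (p̄ − p̄_target)`. Along `T = 1 / (1 + t)` (with `δ = 0`) every `g_s` is scaled by
`1 + t`, and the derivative at `t = 0` is the average expected logit minus the average target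
logit. A nonzero derivative rules out a local minimum, so `L` drops strictly somewhere on the
curve, and a strict drop already forces `(δ, T) ≠ (0, 1)`.
-/

open Filter Topology Matrix

lemma exists_lt_of_hasDerivAt_ne_zero {f : ℝ → ℝ} {c x : ℝ} {U : Set ℝ}
    (hf : HasDerivAt f c x) (hc : c ≠ 0) (hU : U ∈ 𝓝 x) : ∃ t ∈ U, f t < f x := by
  have hnot : ¬IsLocalMin f x := fun hmin => hc (hmin.hasDerivAt_eq_zero hf)
  simp only [IsLocalMin, IsMinFilter, not_eventually, not_le] at hnot
  exact (Eventually.and_frequently hU hnot).exists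

section

variable {ι S : Type*} [Fintype ι] [Fintype S]

def softmax (a : ι → ℝ) (k : ι) : ℝ := Real.exp (a k) / ∑ l, Real.exp (a l)

lemma hasDerivAt_log_sum_exp_line [Nonempty ι] (a b : ι → ℝ) :
    HasDerivAt (fun t : ℝ => Real.log (∑ k, Real.exp (a k + t * b k)))
      (∑ k, softmax a k * b k) 0 := by
  have hsum : HasDerivAt (fun t : ℝ => ∑ k, Real.exp (a k + t * b k))
      (∑ k, Real.exp (a k) * b k) 0 := by
    refine HasDerivAt.fun_sum fun k _ => ?_
    simpa using (((hasDerivAt_id (0 : ℝ)).mul_const (b k)).const_add (a k)).exp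
  have hpos : 0 < ∑ k, Real.exp (a k) :=
    Finset.sum_pos (fun k _ => Real.exp_pos _) Finset.univ_nonempty
  convert hsum.log (by simpa using hpos.ne') using 1
  simp only [zero_mul, add_zero, softmax, Finset.sum_div, div_mul_eq_mul_div]

def meanNLL (z : S → ι → ℝ) (y : S → ι) : ℝ :=
  (Fintype.card S : ℝ)⁻¹ * ∑ s, (Real.log (∑ k, Real.exp (z s k)) - z s (y s))

lemma hasDerivAt_meanNLL_line (z w : S → ι → ℝ) (y : S → ι) :
    HasDerivAt (fun t : ℝ => meanNLL (fun s k => z s k + t * w s k) y)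
      ((Fintype.card S : ℝ)⁻¹ * ∑ s, (∑ k, softmax (z s) k * w s k - w s (y s))) 0 := by
  refine HasDerivAt.const_mul _ (HasDerivAt.fun_sum fun s _ => ?_)
  have : Nonempty ι := ⟨y s⟩
  have hlin : HasDerivAt (fun t : ℝ => z s (y s) + t * w s (y s)) (w s (y s)) 0 := by
    simpa using ((hasDerivAt_id (0 : ℝ)).mul_const (w s (y s))).const_add (z s (y s))
  exact (hasDerivAt_log_sum_exp_line (z s) (w s)).sub hlin

def meanProb (p : S → ι → ℝ) (k : ι) : ℝ := (Fintype.card S : ℝ)⁻¹ * ∑ s, p s k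

def empiricalDist [DecidableEq ι] (y : S → ι) (k : ι) : ℝ :=
  (Fintype.card S : ℝ)⁻¹ * ∑ s, if y s = k then 1 else 0

lemma mean_expectation_sub_eq_dotProduct [DecidableEq ι] (p : S → ι → ℝ) (b : ι → ℝ)
    (y : S → ι) :
    (Fintype.card S : ℝ)⁻¹ * ∑ s, (∑ k, p s k * b k - b (y s))
      = (meanProb p - empiricalDist y) ⬝ᵥ b := by
  simp only [dotProduct, meanProb, empiricalDist, Pi.sub_apply, sub_mul, Finset.sum_sub_distrib,
    mul_sub, Finset.mul_sum, Finset.sum_mul]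
  congr 1
  · rw [Finset.sum_comm]
    simp only [mul_assoc]
  · rw [Finset.sum_comm]
    simp

end

lemma calibLoss_eq_meanNLL {d V : ℕ} {S : Type*} [Fintype S]
    (W : Matrix (Fin V) (Fin d) ℝ) (h : S → Fin d → ℝ) (y : S → Fin V) (δ : Fin d → ℝ) (T : ℝ) :
    calibLoss W h y δ T = meanNLL (fun s k => (W *ᵥ (h s + δ)) k / T) y := rfl

lemma exists_calibLoss_lt_of_gradient_ne_zero {d V : ℕ} {S : Type*} [Fintype S]
    (W : Matrix (Fin V) (Fin d) ℝ) (h : S → Fin d → ℝ) (y : S → Fin V)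
    (hg : Wᵀ *ᵥ (meanProb (softmax1 W h) - empiricalDist y) ≠ 0) :
    ∃ δ, calibLoss W h y δ 1 < calibLoss W h y 0 1 := by
  set g := Wᵀ *ᵥ (meanProb (softmax1 W h) - empiricalDist y)
  have hline (t : ℝ) : calibLoss W h y (t • -g) 1
      = meanNLL (fun s k => (W *ᵥ h s) k + t * (W *ᵥ -g) k) y := by
    simp only [calibLoss_eq_meanNLL, div_one, mulVec_add, mulVec_smul, Pi.add_apply,
      Pi.smul_apply, smul_eq_mul]
  -- `softmax1 W h s` is `softmax (W *ᵥ h s)` by definition.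
  have hderiv := (hasDerivAt_meanNLL_line (fun s => W *ᵥ h s) (fun _ => W *ᵥ -g) y).congr_deriv
    ((mean_expectation_sub_eq_dotProduct (softmax1 W h) _ y).trans
      (by rw [dotProduct_mulVec, ← mulVec_transpose, dotProduct_neg]))
  have hslope : -(g ⬝ᵥ g) ≠ 0 := neg_ne_zero.mpr (mt dotProduct_self_eq_zero.mp hg)
  obtain ⟨t, -, hlt⟩ := exists_lt_of_hasDerivAt_ne_zero hderiv hslope univ_mem
  exact ⟨t • -g, (hline t).trans_lt (hlt.trans_eq (by simpa using (hline 0).symm))⟩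

lemma exists_calibLoss_lt_of_temperature_slope_ne_zero {d V : ℕ} {S : Type*} [Fintype S]
    (W : Matrix (Fin V) (Fin d) ℝ) (h : S → Fin d → ℝ) (y : S → Fin V)
    (hT : (Fintype.card S : ℝ)⁻¹ * ∑ s, (W *ᵥ h s) (y s)
      ≠ (Fintype.card S : ℝ)⁻¹ * ∑ s, ∑ k, softmax1 W h s k * (W *ᵥ h s) k) :
    ∃ T, 0 < T ∧ calibLoss W h y 0 T < calibLoss W h y 0 1 := by
  have hline (t : ℝ) : calibLoss W h y 0 (1 + t)⁻¹
      = meanNLL (fun s k => (W *ᵥ h s) k + t * (W *ᵥ h s) k) y := by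
    simp only [calibLoss_eq_meanNLL, add_zero, div_inv_eq_mul]
    congr 1
    funext s k
    ring
  have hderiv := hasDerivAt_meanNLL_line (fun s => W *ᵥ h s) (fun s => W *ᵥ h s) y
  have hslope : (Fintype.card S : ℝ)⁻¹
      * ∑ s, (∑ k, softmax (W *ᵥ h s) k * (W *ᵥ h s) k - (W *ᵥ h s) (y s)) ≠ 0 := by
    rw [Finset.sum_sub_distrib, mul_sub]
    exact sub_ne_zero.mpr hT.symm
  obtain ⟨t, ht, hlt⟩ :=
    exists_lt_of_hasDerivAt_ne_zero hderiv hslope (Ioi_mem_nhds neg_one_lt_zero)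
  refine ⟨(1 + t)⁻¹, inv_pos.mpr (by linarith [Set.mem_Ioi.mp ht]), ?_⟩
  exact (hline t).trans_lt (hlt.trans_eq (by simpa using (hline 0).symm))

theorem exists_improving_joint_solution_general {d V : ℕ}
    {S : Type*} [Fintype S]
    (W : Matrix (Fin V) (Fin d) ℝ) (h : S → Fin d → ℝ) (y : S → Fin V)
    (hyp :
      W.transpose.mulVec
          (fun k => ((Fintype.card S : ℝ)⁻¹ * ∑ s : S, softmax1 W h s k)
            - ((Fintype.card S : ℝ)⁻¹ * ∑ s : S, if y s = k then (1 : ℝ) else 0)) ≠ 0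
      ∨ (Fintype.card S : ℝ)⁻¹ * ∑ s : S, W.mulVec (h s) (y s)
          ≠ (Fintype.card S : ℝ)⁻¹ * ∑ s : S, ∑ k : Fin V, softmax1 W h s k * W.mulVec (h s) k) :
    ∃ (δ : Fin d → ℝ) (T : ℝ), 0 < T ∧ (δ, T) ≠ ((0 : Fin d → ℝ), (1 : ℝ)) ∧
      calibLoss W h y δ T < calibLoss W h y 0 1 := by
  suffices ∃ (δ : Fin d → ℝ) (T : ℝ), 0 < T ∧ calibLoss W h y δ T < calibLoss W h y 0 1 by
    obtain ⟨δ, T, hT, hlt⟩ := this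
    refine ⟨δ, T, hT, fun hδT => ?_, hlt⟩
    obtain ⟨rfl, rfl⟩ := Prod.mk.inj hδT
    exact lt_irrefl _ hlt
  rcases hyp with hgrad | hlogit
  · obtain ⟨δ, hδ⟩ := exists_calibLoss_lt_of_gradient_ne_zero W h y hgrad
    exact ⟨δ, 1, one_pos, hδ⟩
  · obtain ⟨T, hT, hlt⟩ := exists_calibLoss_lt_of_temperature_slope_ne_zero W h y hlogit
    exact ⟨0, T, hT, hlt⟩

/-- **Existence of an improving joint solution `(δ, T)`.**
If `Wᵀ (p̄ − p̄_target) ≠ 0`, or the average ground-truth logit differs from the average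
expected logit, then there is `(δ, T) ≠ (0, 1)` with `T > 0` and `L(δ, T) < L(0, 1)`. -/
theorem exists_improving_joint_solution {d V : ℕ} (hV : 1 ≤ V)
    {S : Type*} [Fintype S] [Nonempty S]
    (W : Matrix (Fin V) (Fin d) ℝ) (h : S → Fin d → ℝ) (y : S → Fin V)
    (hyp :
      W.transpose.mulVec
          (fun k => ((Fintype.card S : ℝ)⁻¹ * ∑ s : S, softmax1 W h s k)
            - ((Fintype.card S : ℝ)⁻¹ * ∑ s : S, if y s = k then (1 : ℝ) else 0)) ≠ 0
      ∨ (Fintype.card S : ℝ)⁻¹ * ∑ s : S, W.mulVec (h s) (y s)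
          ≠ (Fintype.card S : ℝ)⁻¹ * ∑ s : S, ∑ k : Fin V, softmax1 W h s k * W.mulVec (h s) k) :
    ∃ (δ : Fin d → ℝ) (T : ℝ), 0 < T ∧ (δ, T) ≠ ((0 : Fin d → ℝ), (1 : ℝ)) ∧
      calibLoss W h y δ T < calibLoss W h y 0 1 :=
  exists_improving_joint_solution_general W h y hyp

end
end

section
/- If (1/|S|)·Σ_{s∈S} (W h_s)_{y_s} ≠ (1/|S|)·Σ_{s∈S} Σ_{k=1}^{V} p_s(k)·(W h_s)_k (i.e., the average logit of the ground-truth tokens differs from the average expected logit under the model's predictive distributions at temperature 1), then there exists T > 0 with T ≠ 1 such that L(0, T) < L(0, 1). -/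
/-!
In the inverse temperature `β = 1 / T` the loss `L(0, 1 / β)` is a smooth function of `β`, and
its derivative at `β = 1` is the average expected logit minus the average ground-truth logit.
When this is nonzero, `β = 1` is not a local minimum, so some nearby `β > 0` does better.
-/

noncomputable section

def invTempLoss {S ι : Type*} [Fintype S] [Fintype ι] (a : S → ι → ℝ) (y : S → ι) (β : ℝ) : ℝ :=
  (Fintype.card S : ℝ)⁻¹ * ∑ s, (Real.log (∑ k, Real.exp (β * a s k)) - β * a s (y s))

theorem calibLoss_zero_eq_invTempLoss {d V : ℕ} {S : Type*} [Fintype S]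
    (W : Matrix (Fin V) (Fin d) ℝ) (h : S → Fin d → ℝ) (y : S → Fin V) (T : ℝ) :
    calibLoss W h y 0 T = invTempLoss (fun s => W.mulVec (h s)) y T⁻¹ := by
  simp only [calibLoss, invTempLoss, add_zero, div_eq_inv_mul]

theorem hasDerivAt_log_sum_exp_mul {ι : Type*} [Fintype ι] [Nonempty ι] (a : ι → ℝ) (β : ℝ) :
    HasDerivAt (fun β => Real.log (∑ k, Real.exp (β * a k)))
      ((∑ k, a k * Real.exp (β * a k)) / ∑ k, Real.exp (β * a k)) β := by
  have hsum : HasDerivAt (fun β => ∑ k, Real.exp (β * a k)) (∑ k, a k * Real.exp (β * a k)) β :=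
    HasDerivAt.fun_sum fun k _ => by
      simpa only [mul_comm (Real.exp _)] using (hasDerivAt_mul_const (a k)).exp
  exact hsum.log (Finset.sum_pos (fun k _ => Real.exp_pos _) Finset.univ_nonempty).ne'

theorem hasDerivAt_invTempLoss {S ι : Type*} [Fintype S] [Fintype ι]
    (a : S → ι → ℝ) (y : S → ι) (β : ℝ) :
    HasDerivAt (invTempLoss a y)
      ((Fintype.card S : ℝ)⁻¹ * ∑ s, ((∑ k, a s k * Real.exp (β * a s k)) /
        (∑ k, Real.exp (β * a s k)) - a s (y s))) β := by
  refine HasDerivAt.const_mul _ (HasDerivAt.fun_sum fun s _ => ?_)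
  have : Nonempty ι := ⟨y s⟩
  exact (hasDerivAt_log_sum_exp_mul (a s) β).fun_sub (hasDerivAt_mul_const (a s (y s)))

theorem sum_softmax1_mul {d V : ℕ} {S : Type*}
    (W : Matrix (Fin V) (Fin d) ℝ) (h : S → Fin d → ℝ) (s : S) :
    ∑ k, softmax1 W h s k * W.mulVec (h s) k =
      (∑ k, W.mulVec (h s) k * Real.exp (W.mulVec (h s) k)) /
        ∑ k, Real.exp (W.mulVec (h s) k) := by
  simp only [softmax1, Finset.sum_div, div_mul_eq_mul_div, mul_comm (Real.exp _)]

theorem exists_mem_lt_of_hasDerivAt_ne_zero {f : ℝ → ℝ} {c x₀ : ℝ} (hf : HasDerivAt f c x₀)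
    (hc : c ≠ 0) {U : Set ℝ} (hU : U ∈ nhds x₀) : ∃ x ∈ U, f x < f x₀ := by
  by_contra! hmin
  exact hc (IsLocalMin.hasDerivAt_eq_zero (Filter.mem_of_superset hU hmin) hf)

theorem exists_improving_temperature_general {d V : ℕ}
    {S : Type*} [Fintype S]
    (W : Matrix (Fin V) (Fin d) ℝ) (h : S → Fin d → ℝ) (y : S → Fin V)
    (hyp : (Fintype.card S : ℝ)⁻¹ * ∑ s : S, W.mulVec (h s) (y s)
        ≠ (Fintype.card S : ℝ)⁻¹ * ∑ s : S, ∑ k : Fin V, softmax1 W h s k * W.mulVec (h s) k) :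
    ∃ T : ℝ, 0 < T ∧ T ≠ 1 ∧ calibLoss W h y 0 T < calibLoss W h y 0 1 := by
  have hderiv : HasDerivAt (invTempLoss (fun s => W.mulVec (h s)) y)
      ((Fintype.card S : ℝ)⁻¹ * ∑ s : S, ∑ k : Fin V, softmax1 W h s k * W.mulVec (h s) k
        - (Fintype.card S : ℝ)⁻¹ * ∑ s : S, W.mulVec (h s) (y s)) 1 := by
    convert hasDerivAt_invTempLoss (fun s => W.mulVec (h s)) y 1 using 1
    simp only [one_mul, sum_softmax1_mul, ← mul_sub, ← Finset.sum_sub_distrib]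
  obtain ⟨β, hβ, hlt⟩ :=
    exists_mem_lt_of_hasDerivAt_ne_zero hderiv (sub_ne_zero.2 hyp.symm) (Ioi_mem_nhds one_pos)
  refine ⟨β⁻¹, inv_pos.2 hβ, fun hβ₁ => ?_, ?_⟩
  · rw [inv_eq_one.1 hβ₁] at hlt
    exact hlt.false
  · simpa only [calibLoss_zero_eq_invTempLoss, inv_inv, inv_one] using hlt

/-- If the average ground-truth logit differs from the average expected logit (under the
model's predictive distributions at temperature 1), then there exists `T > 0`, `T ≠ 1`,
with `L(0, T) < L(0, 1)`. -/
theorem exists_improving_temperature {d V : ℕ} (hV : 1 ≤ V)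
    {S : Type*} [Fintype S] [Nonempty S]
    (W : Matrix (Fin V) (Fin d) ℝ) (h : S → Fin d → ℝ) (y : S → Fin V)
    (hyp : (Fintype.card S : ℝ)⁻¹ * ∑ s : S, W.mulVec (h s) (y s)
        ≠ (Fintype.card S : ℝ)⁻¹ * ∑ s : S, ∑ k : Fin V, softmax1 W h s k * W.mulVec (h s) k) :
    ∃ T : ℝ, 0 < T ∧ T ≠ 1 ∧ calibLoss W h y 0 T < calibLoss W h y 0 1 :=
  exists_improving_temperature_general W h y hyp

end
end
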